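/- Let 0 < q < 1 and 0 < ε₀ ≤ 1 − q. Let n′, n″ ∈ ℕ, let a′₁, …, a′_{n′} ∈ ℂ and a″₁, …, a″_{n″} ∈ ℂ, and let m′ := (1/n′) ∑_{i=1}^{n′} δ_{a′ᵢ} and m″ := (1/n″) ∑_{j=1}^{n″} δ_{a″ⱼ} be the corresponding empirical probability measures. If π(m′, m″) < ε₀, then at least ⌊q n″⌋ of the indices j ∈ {1, …, n″} satisfy min_{1≤i≤n′} |a′ᵢ − a″ⱼ| < ε₀. -/

import Mathlib

/-!
Choose `ε < ε₀` admissible in the definition of `π(m′, m″)` and let `A` be the set of the points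
`a″ⱼ` at distance at least `ε₀` from every `a′ᵢ`. The `ε`-neighbourhood of `A` contains no `a′ᵢ`,
so `m″(A) ≤ m′(A^ε) + ε = ε`, i.e. fewer than `ε₀ n″ ≤ (1 - q) n″` indices are bad.
-/

open MeasureTheory

/-- The empirical (probability) measure of points `a 0, …, a (N-1)` of `ℂ`. -/
noncomputable def empiricalFin {N : ℕ} (a : Fin N → ℂ) : Measure ℂ :=
  (N : ENNReal)⁻¹ • ∑ i, MeasureTheory.Measure.dirac (a i)

/-- The Prohorov metric between two (probability) measures on `ℂ`:
`π(m′, m″) = inf{ε > 0 : m′(A) ≤ m″(A^ε) + ε and m″(A) ≤ m′(A^ε) + ε ∀ Borel A}`,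
where `A^ε = ⋃_{a ∈ A} {z : |z - a| < ε}`. -/
noncomputable def prohorovDist (m m' : Measure ℂ) : ℝ :=
  sInf {ε : ℝ | 0 < ε ∧ ∀ A : Set ℂ, MeasurableSet A →
    m A ≤ m' (⋃ a ∈ A, Metric.ball a ε) + ENNReal.ofReal ε ∧
    m' A ≤ m (⋃ a ∈ A, Metric.ball a ε) + ENNReal.ofReal ε}

open Classical in
lemma empiricalFin_apply {N : ℕ} (a : Fin N → ℂ) (A : Set ℂ) :
    empiricalFin a A = (N : ENNReal)⁻¹ * (Finset.univ.filter (fun i => a i ∈ A)).card := by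
  simp only [empiricalFin, Measure.smul_apply, Measure.finsetSum_apply, Measure.dirac_apply,
    Set.indicator_apply, Pi.one_apply, Finset.sum_boole, smul_eq_mul]

lemma empiricalFin_univ_le_one {N : ℕ} (a : Fin N → ℂ) : empiricalFin a Set.univ ≤ 1 := by
  rcases Nat.eq_zero_or_pos N with rfl | hN
  · simp [empiricalFin]
  · rw [empiricalFin_apply]
    calc (N : ENNReal)⁻¹ * _ ≤ (N : ENNReal)⁻¹ * N := by
          gcongr
          exact_mod_cast (Finset.card_le_univ _).trans (Finset.card_fin N).le
      _ = 1 := ENNReal.inv_mul_cancel (by exact_mod_cast hN.ne') (ENNReal.natCast_ne_top N)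

lemma empiricalFin_eq_zero_of_forall_notMem {N : ℕ} {a : Fin N → ℂ} {A : Set ℂ}
    (h : ∀ i, a i ∉ A) : empiricalFin a A = 0 := by
  classical
  simp [empiricalFin_apply, Finset.filter_eq_empty_iff.mpr fun i _ => h i]

lemma card_le_mul_of_empiricalFin_le {N : ℕ} {a : Fin N → ℂ} {A : Set ℂ} {ε : ℝ} (hε : 0 ≤ ε)
    (hA : empiricalFin a A ≤ ENNReal.ofReal ε) (s : Finset (Fin N)) (hs : ∀ i ∈ s, a i ∈ A) :
    (s.card : ℝ) ≤ N * ε := by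
  classical
  rcases Nat.eq_zero_or_pos N with rfl | hN
  · simp [Finset.eq_empty_of_isEmpty s]
  have hsA : (s.card : ENNReal) ≤ ENNReal.ofReal (N * ε) := by
    rw [ENNReal.ofReal_mul (Nat.cast_nonneg N), ENNReal.ofReal_natCast,
      ← ENNReal.inv_mul_le_iff (by exact_mod_cast hN.ne') (ENNReal.natCast_ne_top N)]
    refine le_trans ?_ hA
    rw [empiricalFin_apply]
    gcongr
    exact fun i hi => Finset.mem_filter.mpr ⟨Finset.mem_univ _, hs i hi⟩
  simpa using ENNReal.toReal_le_of_le_ofReal (by positivity) hsA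

lemma prohorovDist_setOf_nonempty {m m' : Measure ℂ} (hm : m Set.univ ≤ 1)
    (hm' : m' Set.univ ≤ 1) :
    {ε : ℝ | 0 < ε ∧ ∀ A : Set ℂ, MeasurableSet A →
      m A ≤ m' (⋃ a ∈ A, Metric.ball a ε) + ENNReal.ofReal ε ∧
      m' A ≤ m (⋃ a ∈ A, Metric.ball a ε) + ENNReal.ofReal ε}.Nonempty :=
  ⟨1, one_pos, fun A _ => by
    simp only [ENNReal.ofReal_one]
    exact ⟨(measure_mono (Set.subset_univ A)).trans (hm.trans le_add_self),
      (measure_mono (Set.subset_univ A)).trans (hm'.trans le_add_self)⟩⟩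

lemma exists_lt_of_prohorovDist_lt {m m' : Measure ℂ} (hm : m Set.univ ≤ 1)
    (hm' : m' Set.univ ≤ 1) {ε₀ : ℝ} (h : prohorovDist m m' < ε₀) :
    ∃ ε, 0 < ε ∧ ε < ε₀ ∧ ∀ A : Set ℂ, MeasurableSet A →
      m' A ≤ m (⋃ a ∈ A, Metric.ball a ε) + ENNReal.ofReal ε := by
  obtain ⟨ε, ⟨hε, hA⟩, hεε₀⟩ := exists_lt_of_csInf_lt (prohorovDist_setOf_nonempty hm hm') h
  exact ⟨ε, hε, hεε₀, fun A hAm => (hA A hAm).2⟩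

theorem statement11_general
    (q ε₀ : ℝ) (hε1 : ε₀ ≤ 1 - q)
    (n' n'' : ℕ)
    (a' : Fin n' → ℂ) (a'' : Fin n'' → ℂ)
    (hπ : prohorovDist (empiricalFin a') (empiricalFin a'') < ε₀) :
    ⌊q * (n'' : ℝ)⌋₊ ≤
      (Finset.univ.filter
        (fun j : Fin n'' => ∃ i : Fin n', ‖a' i - a'' j‖ < ε₀)).card := by
  obtain ⟨ε, hε, hεε₀, hprox⟩ := exists_lt_of_prohorovDist_lt
    (empiricalFin_univ_le_one a') (empiricalFin_univ_le_one a'') hπ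
  set good := Finset.univ.filter (fun j : Fin n'' => ∃ i : Fin n', ‖a' i - a'' j‖ < ε₀)
  set bad := Finset.univ.filter (fun j : Fin n'' => ¬ ∃ i : Fin n', ‖a' i - a'' j‖ < ε₀)
  set A : Set ℂ := a'' '' bad
  have hfar : empiricalFin a' (⋃ z ∈ A, Metric.ball z ε) = 0 := by
    refine empiricalFin_eq_zero_of_forall_notMem fun i hi => ?_
    obtain ⟨_, ⟨j, hj, rfl⟩, hij⟩ := Set.mem_iUnion₂.mp hi
    rw [Metric.mem_ball, dist_eq_norm] at hij
    exact (Finset.mem_filter.mp hj).2 ⟨i, hij.trans hεε₀⟩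
  have hbad : (bad.card : ℝ) ≤ n'' * ε := by
    refine card_le_mul_of_empiricalFin_le (A := A) hε.le ?_ bad fun j hj => ⟨j, hj, rfl⟩
    simpa [hfar] using hprox A (bad.finite_toSet.image a'').measurableSet
  have hsplit : (good.card : ℝ) + bad.card = n'' := by
    exact_mod_cast (Finset.card_filter_add_card_filter_not _).trans (Finset.card_fin n'')
  have hslack : (n'' : ℝ) * ε ≤ n'' * (1 - q) := by gcongr; linarith
  exact Nat.floor_le_of_le (by linarith)

/-- Let `0 < q < 1` and `0 < ε₀ ≤ 1 - q`.  If the empirical measures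
`m′` of `a′₁, …, a′_{n′}` and `m″` of `a″₁, …, a″_{n″}` satisfy `π(m′, m″) < ε₀`, then
at least `⌊q n″⌋` of the indices `j` satisfy `min_i |a′ᵢ - a″ⱼ| < ε₀`. -/
theorem statement11
    (q ε₀ : ℝ) (hq0 : 0 < q) (hq1 : q < 1) (hε0 : 0 < ε₀) (hε1 : ε₀ ≤ 1 - q)
    (n' n'' : ℕ) (hn' : 1 ≤ n') (hn'' : 1 ≤ n'')
    (a' : Fin n' → ℂ) (a'' : Fin n'' → ℂ)
    (hπ : prohorovDist (empiricalFin a') (empiricalFin a'') < ε₀) :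
    ⌊q * (n'' : ℝ)⌋₊ ≤
      (Finset.univ.filter
        (fun j : Fin n'' => ∃ i : Fin n', ‖a' i - a'' j‖ < ε₀)).card :=
  statement11_general q ε₀ hε1 n' n'' a' a'' hπ
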